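/- arXiv:2006.04778 — 2 statements merged into one kernel-verified Lean document; each statement's English description precedes it below -/
import Mathlib

section
/- Suppose η_0 = η_1 = η for some η ∈ (0, 0.4), and let f★ : X → {0,1} be a classifier with min_{i∈{0,1}} Pr_D[f★=1, Z=i] ≥ λ for some λ ∈ (0, 0.5), satisfying Pr_D[f★=1 | Z=0] ≤ Pr_D[f★=1 | Z=1]. Let ε ∈ (0, 0.5) and define Γ := [(η·μ_0 + (1−η)·(1−μ_0)) / ((1−η)·μ_0 + η·(1−μ_0))] · [((1−η)·μ_0·γ(f★,S) + η·(1−μ_0)) / (η·μ_0·γ(f★,S) + (1−η)·(1−μ_0))]. Then with probability at least 1 − 8·exp(−ε²ηλN/192) over the flipping noise, γ(f★,Ŝ) is well-defined and (1−ε)·min{Γ, 1/Γ} ≤ γ(f★,Ŝ) ≤ (1+ε)·min{Γ, 1/Γ}. -/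
open scoped Classical

noncomputable section

/-- Empirical frequency of a predicate over `N` samples. -/
def empFreq (N : ℕ) (P : Fin N → Prop) : ℝ :=
  ((Finset.univ.filter P).card : ℝ) / N

/-- Probability, over independent flipping noise with rates `η0, η1`, of an event on the
noisy binary protected attributes. -/
def noiseProb (N : ℕ) (z : Fin N → Bool) (η0 η1 : ℝ)
    (E : (Fin N → Bool) → Prop) : ℝ :=
  ∑ zh : Fin N → Bool,
    if E zh then
      ∏ a, (if zh a = z a then 1 - cond (z a) η1 η0 else cond (z a) η1 η0)
    else 0

/-- `Pr[f = 1, Z' = i]` for the attribute assignment `z'` (true or noisy). -/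
def prJoint {X : Type} (N : ℕ) (x : Fin N → X) (f : X → Bool)
    (z' : Fin N → Bool) (i : Bool) : ℝ :=
  empFreq N (fun a => f (x a) = true ∧ z' a = i)

/-- `Pr[Z' = i]` for the attribute assignment `z'`. -/
def muOf (N : ℕ) (z' : Fin N → Bool) (i : Bool) : ℝ :=
  empFreq N (fun a => z' a = i)

/-- `Pr[f = 1 ∣ Z' = i]`. -/
def rate {X : Type} (N : ℕ) (x : Fin N → X) (f : X → Bool)
    (z' : Fin N → Bool) (i : Bool) : ℝ :=
  prJoint N x f z' i / muOf N z' i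

/-- Statistical rate `γ(f, ·)` with respect to attribute assignment `z'`. -/
def gammaSR {X : Type} (N : ℕ) (x : Fin N → X) (f : X → Bool)
    (z' : Fin N → Bool) : ℝ :=
  min (rate N x f z' false) (rate N x f z' true) /
    max (rate N x f z' false) (rate N x f z' true)

/-- Denoised rate `Γ_0(f)`. -/
def Gamma0 {X : Type} (N : ℕ) (x : Fin N → X) (η0 η1 : ℝ) (f : X → Bool)
    (zh : Fin N → Bool) : ℝ :=
  ((1 - η1) * prJoint N x f zh false - η1 * prJoint N x f zh true) /
    ((1 - η1) * muOf N zh false - η1 * muOf N zh true)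

/-- Denoised rate `Γ_1(f)`. -/
def Gamma1 {X : Type} (N : ℕ) (x : Fin N → X) (η0 η1 : ℝ) (f : X → Bool)
    (zh : Fin N → Bool) : ℝ :=
  ((1 - η0) * prJoint N x f zh true - η0 * prJoint N x f zh false) /
    ((1 - η0) * muOf N zh true - η0 * muOf N zh false)

/-- Denoised statistical rate `γ^Δ(f, Ŝ)`. -/
def gammaDelta {X : Type} (N : ℕ) (x : Fin N → X) (η0 η1 : ℝ) (f : X → Bool)
    (zh : Fin N → Bool) : ℝ :=
  min (Gamma0 N x η0 η1 f zh / Gamma1 N x η0 η1 f zh)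
    (Gamma1 N x η0 η1 f zh / Gamma0 N x η0 η1 f zh)


set_option maxHeartbeats 2000000
set_option linter.dupNamespace false



namespace S14
variable {N : ℕ} (z : Fin N → Bool) (η : ℝ)

def phi (z : Fin N → Bool) (η : ℝ) (a : Fin N) (b : Bool) : ℝ :=
  if b = z a then 1 - η else η

def wgt (z : Fin N → Bool) (η : ℝ) (zh : Fin N → Bool) : ℝ :=
  ∏ a, phi z η a (zh a)

lemma phi_nonneg (hη0 : 0 ≤ η) (hη1 : η ≤ 1) (a : Fin N) (b : Bool) : 0 ≤ phi z η a b := by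
  unfold phi; split <;> linarith

lemma phi_sum (a : Fin N) : phi z η a false + phi z η a true = 1 := by
  unfold phi; cases h : z a <;> simp [h]

lemma wgt_nonneg (hη0 : 0 ≤ η) (hη1 : η ≤ 1) (zh : Fin N → Bool) : 0 ≤ wgt z η zh :=
  Finset.prod_nonneg fun a _ => phi_nonneg z η hη0 hη1 a (zh a)

lemma key_prod (g : Fin N → Bool → ℝ) :
    ∑ zh : Fin N → Bool, wgt z η zh * ∏ a, g a (zh a)
      = ∏ a, (phi z η a false * g a false + phi z η a true * g a true) := by
  have h1 : ∀ zh : Fin N → Bool, wgt z η zh * ∏ a, g a (zh a)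
      = ∏ a, phi z η a (zh a) * g a (zh a) := by
    intro zh; rw [wgt, ← Finset.prod_mul_distrib]
  simp_rw [h1]
  have := Finset.prod_univ_sum (fun _ : Fin N => (Finset.univ : Finset Bool))
    (fun a b => phi z η a b * g a b)
  rw [Fintype.piFinset_univ] at this
  rw [← this]
  congr 1; ext a
  rw [Fintype.sum_bool]; ring

lemma sum_wgt : ∑ zh : Fin N → Bool, wgt z η zh = 1 := by
  have := key_prod z η (fun _ _ => (1:ℝ))
  simpa [phi_sum] using this


def Ssum (c : Fin N → Bool → ℝ) (zh : Fin N → Bool) : ℝ := ∑ a, c a (zh a)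

def mexp (z : Fin N → Bool) (η : ℝ) (c : Fin N → Bool → ℝ) : ℝ :=
  ∑ a, (phi z η a false * c a false + phi z η a true * c a true)

lemma exp_quad {t : ℝ} (ht : |t| ≤ 1) : Real.exp t - 1 - t ≤ (3/4) * t^2 := by
  have h := Real.exp_bound ht (n := 2) (by norm_num)
  have h2 : ∑ m ∈ Finset.range 2, t ^ m / (m.factorial : ℝ) = 1 + t := by
    simp [Finset.sum_range_succ]
  rw [h2] at h
  have h3 : Real.exp t - (1 + t) ≤ |t| ^ 2 * ((2:ℕ).succ / ((2:ℕ).factorial * (2:ℕ))) :=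
    le_trans (le_abs_self _) h
  have h4 : ((2:ℕ).succ : ℝ) / (((2:ℕ).factorial : ℝ) * (2:ℕ)) = 3/4 := by
    norm_num [Nat.factorial]
  rw [h4, sq_abs] at h3
  linarith

lemma mexp_nonneg (hη0 : 0 ≤ η) (hη1 : η ≤ 1) (c : Fin N → Bool → ℝ)
    (hc : ∀ a b, 0 ≤ c a b) : 0 ≤ mexp z η c := by
  refine Finset.sum_nonneg fun a _ => ?_
  have h1 := phi_nonneg z η hη0 hη1 a false
  have h2 := phi_nonneg z η hη0 hη1 a true
  have h3 := hc a false
  have h4 := hc a true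
  positivity

lemma mgf_le (hη0 : 0 ≤ η) (hη1 : η ≤ 1) (c : Fin N → Bool → ℝ)
    (hc : ∀ a b, c a b = 0 ∨ c a b = 1) (t : ℝ) :
    ∑ zh : Fin N → Bool, wgt z η zh * Real.exp (t * Ssum c zh)
      ≤ Real.exp ((Real.exp t - 1) * mexp z η c) := by
  have hrw : ∀ zh : Fin N → Bool, Real.exp (t * Ssum c zh) = ∏ a, Real.exp (t * c a (zh a)) := by
    intro zh
    rw [← Real.exp_sum, Ssum, Finset.mul_sum]
  simp_rw [hrw]
  rw [key_prod z η (fun a b => Real.exp (t * c a b))]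
  have hfac : ∀ a : Fin N,
      phi z η a false * Real.exp (t * c a false) + phi z η a true * Real.exp (t * c a true)
      = 1 + (Real.exp t - 1) * (phi z η a false * c a false + phi z η a true * c a true) := by
    intro a
    have he : ∀ b : Bool, Real.exp (t * c a b) = 1 + c a b * (Real.exp t - 1) := by
      intro b
      rcases hc a b with h | h <;> simp [h]
    rw [he false, he true]
    have := phi_sum z η a
    ring_nf
    nlinarith [this]
  calc ∏ a, (phi z η a false * Real.exp (t * c a false) + phi z η a true * Real.exp (t * c a true))
      ≤ ∏ a, Real.exp ((Real.exp t - 1) * (phi z η a false * c a false + phi z η a true * c a true)) := by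
        apply Finset.prod_le_prod
        · intro a _
          have h1 := phi_nonneg z η hη0 hη1 a false
          have h2 := phi_nonneg z η hη0 hη1 a true
          positivity
        · intro a _
          rw [hfac a]
          have := Real.add_one_le_exp ((Real.exp t - 1) * (phi z η a false * c a false + phi z η a true * c a true))
          linarith
    _ = Real.exp ((Real.exp t - 1) * mexp z η c) := by
        rw [← Real.exp_sum, mexp, Finset.mul_sum]

lemma chernoff_upper (hη0 : 0 ≤ η) (hη1 : η ≤ 1) (c : Fin N → Bool → ℝ)
    (hc : ∀ a b, c a b = 0 ∨ c a b = 1) {δ : ℝ} (hδ0 : 0 < δ) (hδ1 : δ ≤ 1) :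
    ∑ zh : Fin N → Bool, (if (1 + δ) * mexp z η c ≤ Ssum c zh then wgt z η zh else 0)
      ≤ Real.exp (-(δ^2 * mexp z η c) / 3) := by
  set m := mexp z η c with hm
  have hmn : 0 ≤ m := mexp_nonneg z η hη0 hη1 c (fun a b => by rcases hc a b with h|h <;> simp [h])
  set t : ℝ := 2 * δ / 3 with htdef
  have ht0 : 0 < t := by rw [htdef]; linarith
  have step1 : ∑ zh : Fin N → Bool, (if (1 + δ) * m ≤ Ssum c zh then wgt z η zh else 0)
      ≤ ∑ zh : Fin N → Bool, wgt z η zh * Real.exp (t * Ssum c zh) * Real.exp (-(t * (1 + δ) * m)) := by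
    apply Finset.sum_le_sum
    intro zh _
    have hw := wgt_nonneg z η hη0 hη1 zh
    split
    · rename_i hE
      rw [mul_assoc, ← Real.exp_add]
      have : (1:ℝ) ≤ Real.exp (t * Ssum c zh + -(t * (1 + δ) * m)) := by
        apply Real.one_le_exp
        nlinarith
      nlinarith [this]
    · positivity
  have step2 : ∑ zh : Fin N → Bool, wgt z η zh * Real.exp (t * Ssum c zh) * Real.exp (-(t * (1 + δ) * m))
      = (∑ zh : Fin N → Bool, wgt z η zh * Real.exp (t * Ssum c zh)) * Real.exp (-(t * (1 + δ) * m)) := by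
    rw [Finset.sum_mul]
  have step3 := mgf_le z η hη0 hη1 c hc t
  have step4 : (∑ zh : Fin N → Bool, wgt z η zh * Real.exp (t * Ssum c zh)) * Real.exp (-(t * (1 + δ) * m))
      ≤ Real.exp ((Real.exp t - 1) * m) * Real.exp (-(t * (1 + δ) * m)) := by
    apply mul_le_mul_of_nonneg_right step3 (le_of_lt (Real.exp_pos _))
  have step5 : Real.exp ((Real.exp t - 1) * m) * Real.exp (-(t * (1 + δ) * m))
      ≤ Real.exp (-(δ^2 * m) / 3) := by
    rw [← Real.exp_add]
    apply Real.exp_le_exp.mpr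
    have hq : Real.exp t - 1 - t ≤ (3/4) * t^2 := exp_quad (by rw [htdef, abs_of_pos ht0]; linarith)
    have hkey : (Real.exp t - 1) - t * (1 + δ) ≤ -(δ^2) / 3 := by
      rw [htdef] at hq ⊢; nlinarith
    nlinarith [mul_le_mul_of_nonneg_right hkey hmn]
  calc _ ≤ _ := step1
    _ = _ := step2
    _ ≤ _ := step4
    _ ≤ _ := step5

lemma chernoff_lower (hη0 : 0 ≤ η) (hη1 : η ≤ 1) (c : Fin N → Bool → ℝ)
    (hc : ∀ a b, c a b = 0 ∨ c a b = 1) {δ : ℝ} (hδ0 : 0 < δ) (hδ1 : δ ≤ 1) :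
    ∑ zh : Fin N → Bool, (if Ssum c zh ≤ (1 - δ) * mexp z η c then wgt z η zh else 0)
      ≤ Real.exp (-(δ^2 * mexp z η c) / 3) := by
  set m := mexp z η c with hm
  have hmn : 0 ≤ m := mexp_nonneg z η hη0 hη1 c (fun a b => by rcases hc a b with h|h <;> simp [h])
  set t : ℝ := 2 * δ / 3 with htdef
  have ht0 : 0 < t := by rw [htdef]; linarith
  have step1 : ∑ zh : Fin N → Bool, (if Ssum c zh ≤ (1 - δ) * m then wgt z η zh else 0)
      ≤ ∑ zh : Fin N → Bool, wgt z η zh * Real.exp ((-t) * Ssum c zh) * Real.exp (t * (1 - δ) * m) := by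
    apply Finset.sum_le_sum
    intro zh _
    have hw := wgt_nonneg z η hη0 hη1 zh
    split
    · rename_i hE
      rw [mul_assoc, ← Real.exp_add]
      have : (1:ℝ) ≤ Real.exp ((-t) * Ssum c zh + t * (1 - δ) * m) := by
        apply Real.one_le_exp
        nlinarith
      nlinarith [this]
    · positivity
  have step2 : ∑ zh : Fin N → Bool, wgt z η zh * Real.exp ((-t) * Ssum c zh) * Real.exp (t * (1 - δ) * m)
      = (∑ zh : Fin N → Bool, wgt z η zh * Real.exp ((-t) * Ssum c zh)) * Real.exp (t * (1 - δ) * m) := by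
    rw [Finset.sum_mul]
  have step3 := mgf_le z η hη0 hη1 c hc (-t)
  have step4 : (∑ zh : Fin N → Bool, wgt z η zh * Real.exp ((-t) * Ssum c zh)) * Real.exp (t * (1 - δ) * m)
      ≤ Real.exp ((Real.exp (-t) - 1) * m) * Real.exp (t * (1 - δ) * m) := by
    apply mul_le_mul_of_nonneg_right step3 (le_of_lt (Real.exp_pos _))
  have step5 : Real.exp ((Real.exp (-t) - 1) * m) * Real.exp (t * (1 - δ) * m)
      ≤ Real.exp (-(δ^2 * m) / 3) := by
    rw [← Real.exp_add]
    apply Real.exp_le_exp.mpr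
    have hq : Real.exp (-t) - 1 - (-t) ≤ (3/4) * (-t)^2 := by
      apply exp_quad
      rw [abs_neg, abs_of_pos ht0]; rw [htdef]; linarith
    have hkey : (Real.exp (-t) - 1) + t * (1 - δ) ≤ -(δ^2) / 3 := by
      rw [htdef] at hq ⊢; nlinarith
    nlinarith [mul_le_mul_of_nonneg_right hkey hmn]
  calc _ ≤ _ := step1
    _ = _ := step2
    _ ≤ _ := step4
    _ ≤ _ := step5




lemma sc1 {e : ℝ} (h0 : 0 < e) (h2 : e < 1/2) :
    (1-e) * ((1+e/8)*(1+e/8)) ≤ (1-e/8)*(1-e/8) := by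
  nlinarith [mul_pos h0 h0, mul_pos (mul_pos h0 h0) h0]

lemma sc2 {e : ℝ} (h0 : 0 < e) (h2 : e < 1/2) :
    (1+e/8)*(1+e/8) ≤ (1+e) * ((1-e/8)*(1-e/8)) := by
  nlinarith [mul_pos h0 h0, mul_pos (mul_pos h0 h0) h0, mul_nonneg h0.le h0.le]

lemma frac_shuffle {a b m M : ℝ} (ha : a ≠ 0) (hb : b ≠ 0) (hM : M ≠ 0) :
    (a/b * m)/((b/a) * M) = (a*a/(b*b)) * (m/M) := by
  field_simp

lemma det (μ0 μ1 p0 p1 μh0 μh1 ph0 ph1 η lam ε γ : ℝ)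
    (hμ : μ0 + μ1 = 1) (hμ0 : 0 < μ0) (hμ1 : 0 < μ1)
    (hη0 : 0 < η) (hη4 : η < 0.4) (hlam : 0 < lam) (hε0 : 0 < ε) (hε2 : ε < 1/2)
    (hp0 : lam ≤ p0) (hp1 : lam ≤ p1)
    (hord : p0/μ0 ≤ p1/μ1)
    (hγ : γ = min (p0/μ0) (p1/μ1) / max (p0/μ0) (p1/μ1))
    (hb1 : (1 - ε/8) * ((1-η)*p0 + η*p1) ≤ ph0) (hb2 : ph0 ≤ (1 + ε/8) * ((1-η)*p0 + η*p1))
    (hb3 : (1 - ε/8) * (η*p0 + (1-η)*p1) ≤ ph1) (hb4 : ph1 ≤ (1 + ε/8) * (η*p0 + (1-η)*p1))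
    (hb5 : (1 - ε/8) * ((1-η)*μ0 + η*μ1) ≤ μh0) (hb6 : μh0 ≤ (1 + ε/8) * ((1-η)*μ0 + η*μ1))
    (hb7 : (1 - ε/8) * (η*μ0 + (1-η)*μ1) ≤ μh1) (hb8 : μh1 ≤ (1 + ε/8) * (η*μ0 + (1-η)*μ1)) :
    0 < μh0 ∧ 0 < μh1 ∧ 0 < max (ph0/μh0) (ph1/μh1) ∧
    (1-ε) * min ((η*μ0 + (1-η)*(1-μ0))/((1-η)*μ0 + η*(1-μ0)) *
        (((1-η)*μ0*γ + η*(1-μ0))/(η*μ0*γ + (1-η)*(1-μ0))))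
      (1/((η*μ0 + (1-η)*(1-μ0))/((1-η)*μ0 + η*(1-μ0)) *
        (((1-η)*μ0*γ + η*(1-μ0))/(η*μ0*γ + (1-η)*(1-μ0)))))
      ≤ min (ph0/μh0) (ph1/μh1) / max (ph0/μh0) (ph1/μh1) ∧
    min (ph0/μh0) (ph1/μh1) / max (ph0/μh0) (ph1/μh1) ≤
    (1+ε) * min ((η*μ0 + (1-η)*(1-μ0))/((1-η)*μ0 + η*(1-μ0)) *
        (((1-η)*μ0*γ + η*(1-μ0))/(η*μ0*γ + (1-η)*(1-μ0))))
      (1/((η*μ0 + (1-η)*(1-μ0))/((1-η)*μ0 + η*(1-μ0)) *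
        (((1-η)*μ0*γ + η*(1-μ0))/(η*μ0*γ + (1-η)*(1-μ0))))) := by
  obtain ⟨δ, hδdef⟩ : ∃ d : ℝ, d = ε/8 := ⟨_, rfl⟩
  rw [← hδdef] at hb1 hb2 hb3 hb4 hb5 hb6 hb7 hb8
  have hδ0 : 0 < δ := by rw [hδdef]; linarith
  have hδ1 : δ < 1/16 := by rw [hδdef]; linarith
  have hp0pos : 0 < p0 := lt_of_lt_of_le hlam hp0
  have hp1pos : 0 < p1 := lt_of_lt_of_le hlam hp1
  have h1η : 0 < 1 - η := by linarith
  have hEJ0 : 0 < (1-η)*p0 + η*p1 := by nlinarith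
  have hEJ1 : 0 < η*p0 + (1-η)*p1 := by nlinarith
  have hEμ0 : 0 < (1-η)*μ0 + η*μ1 := by nlinarith
  have hEμ1 : 0 < η*μ0 + (1-η)*μ1 := by nlinarith
  have hμh0 : 0 < μh0 := lt_of_lt_of_le (by nlinarith) hb5
  have hμh1 : 0 < μh1 := lt_of_lt_of_le (by nlinarith) hb7
  have hph0 : 0 < ph0 := lt_of_lt_of_le (by nlinarith) hb1
  have hph1 : 0 < ph1 := lt_of_lt_of_le (by nlinarith) hb3
  have hr0pos : 0 < ph0/μh0 := div_pos hph0 hμh0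
  have hr1pos : 0 < ph1/μh1 := div_pos hph1 hμh1
  have hμ1eq : (1 : ℝ) - μ0 = μ1 := by linarith
  have hγ' : γ = (p0/μ0)/(p1/μ1) := by rw [hγ, min_eq_left hord, max_eq_right hord]
  obtain ⟨R0, hR0def⟩ : ∃ r : ℝ, r = ((1-η)*p0 + η*p1)/((1-η)*μ0 + η*μ1) := ⟨_, rfl⟩
  obtain ⟨R1, hR1def⟩ : ∃ r : ℝ, r = (η*p0 + (1-η)*p1)/(η*μ0 + (1-η)*μ1) := ⟨_, rfl⟩
  have hR0 : 0 < R0 := hR0def ▸ div_pos hEJ0 hEμ0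
  have hR1 : 0 < R1 := hR1def ▸ div_pos hEJ1 hEμ1
  have hq : (0:ℝ) < p1/μ1 := div_pos hp1pos hμ1
  -- Gamma identity
  have hnum : (1-η)*μ0*γ + η*(1-μ0) = ((1-η)*p0 + η*p1)/(p1/μ1) := by
    rw [hγ', hμ1eq]
    field_simp
  have hden : η*μ0*γ + (1-η)*(1-μ0) = (η*p0 + (1-η)*p1)/(p1/μ1) := by
    rw [hγ', hμ1eq]
    field_simp
  have hGam : (η*μ0 + (1-η)*(1-μ0))/((1-η)*μ0 + η*(1-μ0)) *
      (((1-η)*μ0*γ + η*(1-μ0))/(η*μ0*γ + (1-η)*(1-μ0))) = R0 / R1 := by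
    rw [hnum, hden, hμ1eq, hR0def, hR1def]
    field_simp
  rw [hGam]
  -- min of Gamma and inverse
  have hminmax : min (R0/R1) (1/(R0/R1)) = min R0 R1 / max R0 R1 := by
    rw [one_div_div]
    rcases le_total R0 R1 with h | h
    · rw [min_eq_left h, max_eq_right h, min_eq_left]
      have h1 : R0/R1 ≤ 1 := div_le_one_of_le₀ h (le_of_lt hR1)
      have h2 : (1:ℝ) ≤ R1/R0 := (one_le_div hR0).mpr h
      linarith
    · rw [min_eq_right h, max_eq_left h, min_eq_right]
      have h1 : R1/R0 ≤ 1 := div_le_one_of_le₀ h (le_of_lt hR0)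
      have h2 : (1:ℝ) ≤ R0/R1 := (one_le_div hR1).mpr h
      linarith
  rw [hminmax]
  -- rate bounds
  have hc1pos : 0 < (1-δ)/(1+δ) := by apply div_pos <;> linarith
  have hc2pos : 0 < (1+δ)/(1-δ) := by apply div_pos <;> linarith
  have hrl0 : (1-δ)/(1+δ) * R0 ≤ ph0/μh0 := by
    rw [hR0def, div_mul_div_comm]
    exact div_le_div₀ (le_of_lt hph0) hb1 hμh0 hb6
  have hrl1 : (1-δ)/(1+δ) * R1 ≤ ph1/μh1 := by
    rw [hR1def, div_mul_div_comm]
    exact div_le_div₀ (le_of_lt hph1) hb3 hμh1 hb8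
  have hru0 : ph0/μh0 ≤ (1+δ)/(1-δ) * R0 := by
    rw [hR0def, div_mul_div_comm]
    apply div_le_div₀ (by positivity) hb2 (by nlinarith) hb5
  have hru1 : ph1/μh1 ≤ (1+δ)/(1-δ) * R1 := by
    rw [hR1def, div_mul_div_comm]
    apply div_le_div₀ (by positivity) hb4 (by nlinarith) hb7
  have hminl : (1-δ)/(1+δ) * min R0 R1 ≤ min (ph0/μh0) (ph1/μh1) := by
    apply le_min
    · exact le_trans (mul_le_mul_of_nonneg_left (min_le_left _ _) (le_of_lt hc1pos)) hrl0
    · exact le_trans (mul_le_mul_of_nonneg_left (min_le_right _ _) (le_of_lt hc1pos)) hrl1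
  have hminu : min (ph0/μh0) (ph1/μh1) ≤ (1+δ)/(1-δ) * min R0 R1 := by
    rcases le_total R0 R1 with h | h
    · rw [min_eq_left h]
      exact le_trans (min_le_left _ _) hru0
    · rw [min_eq_right h]
      exact le_trans (min_le_right _ _) hru1
  have hmaxu : max (ph0/μh0) (ph1/μh1) ≤ (1+δ)/(1-δ) * max R0 R1 := by
    apply max_le
    · exact le_trans hru0 (mul_le_mul_of_nonneg_left (le_max_left _ _) (le_of_lt hc2pos))
    · exact le_trans hru1 (mul_le_mul_of_nonneg_left (le_max_right _ _) (le_of_lt hc2pos))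
  have hmaxl : (1-δ)/(1+δ) * max R0 R1 ≤ max (ph0/μh0) (ph1/μh1) := by
    rcases le_total R0 R1 with h | h
    · rw [max_eq_right h]
      exact le_trans hrl1 (le_max_right _ _)
    · rw [max_eq_left h]
      exact le_trans hrl0 (le_max_left _ _)
  have hmaxRpos : 0 < max R0 R1 := lt_of_lt_of_le hR0 (le_max_left _ _)
  have hminRpos : 0 < min R0 R1 := lt_min hR0 hR1
  have hmaxhpos : 0 < max (ph0/μh0) (ph1/μh1) := lt_of_lt_of_le hr0pos (le_max_left _ _)
  refine ⟨hμh0, hμh1, hmaxhpos, ?_, ?_⟩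
  · -- lower bound
    have key : ((1-δ)/(1+δ) * min R0 R1) / ((1+δ)/(1-δ) * max R0 R1)
        ≤ min (ph0/μh0) (ph1/μh1) / max (ph0/μh0) (ph1/μh1) := by
      exact div_le_div₀ (le_of_lt (lt_min hr0pos hr1pos)) hminl hmaxhpos hmaxu
    have heq : ((1-δ)/(1+δ) * min R0 R1) / ((1+δ)/(1-δ) * max R0 R1)
        = ((1-δ)*(1-δ)/((1+δ)*(1+δ))) * (min R0 R1 / max R0 R1) :=
      frac_shuffle (by linarith) (by linarith) hmaxRpos.ne'
    have hcoef : 1 - ε ≤ (1-δ)*(1-δ)/((1+δ)*(1+δ)) := by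
      have hpos : (0:ℝ) < (1+δ)*(1+δ) := mul_pos (by linarith) (by linarith)
      rw [le_div_iff₀ hpos, hδdef]
      exact sc1 hε0 hε2
    calc (1-ε) * (min R0 R1 / max R0 R1)
        ≤ ((1-δ)*(1-δ)/((1+δ)*(1+δ))) * (min R0 R1 / max R0 R1) := by
          exact mul_le_mul_of_nonneg_right hcoef (div_pos hminRpos hmaxRpos).le
      _ = _ := heq.symm
      _ ≤ _ := key
  · -- upper bound
    have key : min (ph0/μh0) (ph1/μh1) / max (ph0/μh0) (ph1/μh1)
        ≤ ((1+δ)/(1-δ) * min R0 R1) / ((1-δ)/(1+δ) * max R0 R1) := by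
      exact div_le_div₀ (mul_pos hc2pos hminRpos).le hminu (mul_pos hc1pos hmaxRpos) hmaxl
    have heq : ((1+δ)/(1-δ) * min R0 R1) / ((1-δ)/(1+δ) * max R0 R1)
        = ((1+δ)*(1+δ)/((1-δ)*(1-δ))) * (min R0 R1 / max R0 R1) :=
      frac_shuffle (by linarith) (by linarith) hmaxRpos.ne'
    have hcoef : (1+δ)*(1+δ)/((1-δ)*(1-δ)) ≤ 1 + ε := by
      have hpos : (0:ℝ) < (1-δ)*(1-δ) := mul_pos (by linarith) (by linarith)
      rw [div_le_iff₀ hpos, hδdef]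
      exact sc2 hε0 hε2
    calc min (ph0/μh0) (ph1/μh1) / max (ph0/μh0) (ph1/μh1)
        ≤ ((1+δ)/(1-δ) * min R0 R1) / ((1-δ)/(1+δ) * max R0 R1) := key
      _ = ((1+δ)*(1+δ)/((1-δ)*(1-δ))) * (min R0 R1 / max R0 R1) := heq
      _ ≤ (1+ε) * (min R0 R1 / max R0 R1) := by
          exact mul_le_mul_of_nonneg_right hcoef (div_pos hminRpos hmaxRpos).le


lemma noiseProb_eq {N : ℕ} (z : Fin N → Bool) (η : ℝ) (E : (Fin N → Bool) → Prop) :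
    noiseProb N z η η E = ∑ zh : Fin N → Bool, if E zh then wgt z η zh else 0 := by
  unfold noiseProb wgt phi
  simp only [Bool.cond_self]

lemma sum_indicator {N : ℕ} (hN : (N:ℝ) ≠ 0) (Q : Fin N → Prop) [DecidablePred Q] :
    ∑ a, (if Q a then (1:ℝ) else 0) = N * empFreq N Q := by
  unfold empFreq
  rw [Finset.card_filter]
  push_cast
  rw [mul_comm, div_mul_cancel₀ _ hN]

lemma cstat01 {N : ℕ} (P : Fin N → Prop) [DecidablePred P] (i : Bool) :
    ∀ a b, (fun a b => if P a ∧ b = i then (1:ℝ) else 0) a b = 0 ∨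
           (fun a b => if P a ∧ b = i then (1:ℝ) else 0) a b = 1 := by
  intro a b
  by_cases h : P a ∧ b = i <;> simp [h]

lemma Ssum_cstat {N : ℕ} (hN : (N:ℝ) ≠ 0) (P : Fin N → Prop) [DecidablePred P] (i : Bool) (zh : Fin N → Bool) :
    Ssum (fun a b => if P a ∧ b = i then (1:ℝ) else 0) zh
      = N * empFreq N (fun a => P a ∧ zh a = i) := by
  unfold Ssum
  simpa using sum_indicator hN (fun a => P a ∧ zh a = i)

lemma mexp_cstat {N : ℕ} (z : Fin N → Bool) (η : ℝ) (hN : (N:ℝ) ≠ 0) (P : Fin N → Prop) [DecidablePred P] (i : Bool) :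
    mexp z η (fun a b => if P a ∧ b = i then (1:ℝ) else 0)
      = N * ((1-η) * empFreq N (fun a => P a ∧ z a = i) + η * empFreq N (fun a => P a ∧ z a = !i)) := by
  unfold mexp
  have key : ∀ a : Fin N,
      phi z η a false * (if P a ∧ false = i then (1:ℝ) else 0)
        + phi z η a true * (if P a ∧ true = i then (1:ℝ) else 0)
      = (1-η) * (if P a ∧ z a = i then (1:ℝ) else 0) + η * (if P a ∧ z a = !i then (1:ℝ) else 0) := by
    intro a
    unfold phi
    by_cases hP : P a <;> cases hz : z a <;> cases i <;> simp [hP, hz]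
  simp_rw [key]
  rw [Finset.sum_add_distrib, ← Finset.mul_sum, ← Finset.mul_sum,
    sum_indicator hN (fun a => P a ∧ z a = i), sum_indicator hN (fun a => P a ∧ z a = !i)]
  ring

lemma empFreq_trueand {N : ℕ} (zh : Fin N → Bool) (i : Bool) :
    empFreq N (fun a => True ∧ zh a = i) = muOf N zh i := by
  have h : (fun a : Fin N => True ∧ zh a = i) = (fun a => zh a = i) := by
    funext a; simp
  rw [show empFreq N (fun a => True ∧ zh a = i) = empFreq N (fun a => zh a = i) from by rw [h]]
  rfl

lemma muOf_total {N : ℕ} (hN : (N:ℝ) ≠ 0) (z : Fin N → Bool) :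
    muOf N z false + muOf N z true = 1 := by
  have h0 := (sum_indicator hN (fun a => z a = false)).symm
  have h1 := (sum_indicator hN (fun a => z a = true)).symm
  have key : ∑ a : Fin N, ((if z a = false then (1:ℝ) else 0) + (if z a = true then 1 else 0))
      = N := by
    rw [Finset.sum_congr rfl (fun a _ => show _ = (1:ℝ) from by cases h : z a <;> simp [h])]
    simp
  rw [Finset.sum_add_distrib] at key
  have hNkey : (N:ℝ) * muOf N z false + (N:ℝ) * muOf N z true = N := by
    show (N:ℝ) * empFreq N (fun a => z a = false) + (N:ℝ) * empFreq N (fun a => z a = true) = N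
    rw [← h0, ← h1] at key
    exact key
  have := mul_left_cancel₀ hN (show (N:ℝ) * (muOf N z false + muOf N z true) = (N:ℝ) * 1 by
    rw [mul_one, mul_add]; linarith)
  linarith [this]

lemma scale_le {n a b c : ℝ} (hn : 0 < n) (h : n * a ≤ b * (n * c)) : a ≤ b * c := by
  nlinarith

lemma scale_ge {n a b c : ℝ} (hn : 0 < n) (h : b * (n * c) ≤ n * a) : b * c ≤ a := by
  nlinarith

lemma union8 {N : ℕ} (z : Fin N → Bool) (η : ℝ) (hη0 : 0 ≤ η) (hη1 : η ≤ 1)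
    (B1 B2 B3 B4 B5 B6 B7 B8 E : (Fin N → Bool) → Prop)
    (himp : ∀ zh, ¬ B1 zh → ¬ B2 zh → ¬ B3 zh → ¬ B4 zh → ¬ B5 zh → ¬ B6 zh → ¬ B7 zh →
      ¬ B8 zh → E zh) :
    1 - ((∑ zh : Fin N → Bool, if B1 zh then wgt z η zh else 0)
       + (∑ zh : Fin N → Bool, if B2 zh then wgt z η zh else 0)
       + (∑ zh : Fin N → Bool, if B3 zh then wgt z η zh else 0)
       + (∑ zh : Fin N → Bool, if B4 zh then wgt z η zh else 0)
       + (∑ zh : Fin N → Bool, if B5 zh then wgt z η zh else 0)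
       + (∑ zh : Fin N → Bool, if B6 zh then wgt z η zh else 0)
       + (∑ zh : Fin N → Bool, if B7 zh then wgt z η zh else 0)
       + (∑ zh : Fin N → Bool, if B8 zh then wgt z η zh else 0))
      ≤ ∑ zh : Fin N → Bool, if E zh then wgt z η zh else 0 := by
  have key : ∀ zh : Fin N → Bool, wgt z η zh ≤
      (if E zh then wgt z η zh else 0)
      + ((if B1 zh then wgt z η zh else 0) + (if B2 zh then wgt z η zh else 0)
       + (if B3 zh then wgt z η zh else 0) + (if B4 zh then wgt z η zh else 0)
       + (if B5 zh then wgt z η zh else 0) + (if B6 zh then wgt z η zh else 0)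
       + (if B7 zh then wgt z η zh else 0) + (if B8 zh then wgt z η zh else 0)) := by
    intro zh
    have hw := wgt_nonneg z η hη0 hη1 zh
    have t : ∀ P : Prop, 0 ≤ (if P then wgt z η zh else 0) := by
      intro P; split
      · exact hw
      · exact le_rfl
    have tE := t (E zh); have t1 := t (B1 zh); have t2 := t (B2 zh); have t3 := t (B3 zh)
    have t4 := t (B4 zh); have t5 := t (B5 zh); have t6 := t (B6 zh); have t7 := t (B7 zh)
    have t8 := t (B8 zh)
    by_cases h1 : B1 zh
    · rw [if_pos h1]; linarith
    by_cases h2 : B2 zh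
    · rw [if_pos h2]; linarith
    by_cases h3 : B3 zh
    · rw [if_pos h3]; linarith
    by_cases h4 : B4 zh
    · rw [if_pos h4]; linarith
    by_cases h5 : B5 zh
    · rw [if_pos h5]; linarith
    by_cases h6 : B6 zh
    · rw [if_pos h6]; linarith
    by_cases h7 : B7 zh
    · rw [if_pos h7]; linarith
    by_cases h8 : B8 zh
    · rw [if_pos h8]; linarith
    rw [if_pos (himp zh h1 h2 h3 h4 h5 h6 h7 h8)]
    linarith
  have hsum : ∑ zh : Fin N → Bool, wgt z η zh ≤
      ∑ zh : Fin N → Bool, ((if E zh then wgt z η zh else 0)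
      + ((if B1 zh then wgt z η zh else 0) + (if B2 zh then wgt z η zh else 0)
       + (if B3 zh then wgt z η zh else 0) + (if B4 zh then wgt z η zh else 0)
       + (if B5 zh then wgt z η zh else 0) + (if B6 zh then wgt z η zh else 0)
       + (if B7 zh then wgt z η zh else 0) + (if B8 zh then wgt z η zh else 0))) :=
    Finset.sum_le_sum (fun zh _ => key zh)
  rw [sum_wgt z η] at hsum
  simp only [Finset.sum_add_distrib] at hsum
  linarith

end S14
/-- For symmetric noise `η0 = η1 = η ∈ (0, 0.4)` and a classifier `f★` with
`min_i Pr_D[f★=1,Z=i] ≥ λ` and `Pr_D[f★=1|Z=0] ≤ Pr_D[f★=1|Z=1]`, with probability at least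
`1 − 8·exp(−ε²ηλN/192)` the noisy statistical rate `γ(f★,Ŝ)` is well defined and lies in
`(1 ± ε)·min{Γ, 1/Γ}`. -/
theorem stmt_14 {X : Type} (N : ℕ) (hN : 1 ≤ N)
    (x : Fin N → X) (z : Fin N → Bool) (y : Fin N → Bool)
    (η : ℝ) (hη : 0 < η ∧ η < 0.4)
    (hμ0 : 0 < muOf N z false) (hμ1 : 0 < muOf N z true)
    (fstar : X → Bool)
    (hwd : 0 < max (rate N x fstar z false) (rate N x fstar z true))
    (lam : ℝ) (hlam : 0 < lam ∧ lam < 1/2)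
    (hmin : lam ≤ min (prJoint N x fstar z false) (prJoint N x fstar z true))
    (hord : rate N x fstar z false ≤ rate N x fstar z true)
    (ε : ℝ) (hε : 0 < ε ∧ ε < 1/2) :
    1 - 8 * Real.exp (-(ε ^ 2 * η * lam * N) / 192) ≤
      noiseProb N z η η (fun zh =>
        0 < muOf N zh false ∧ 0 < muOf N zh true ∧
        0 < max (rate N x fstar zh false) (rate N x fstar zh true) ∧
        (1 - ε) * min
            ((η * muOf N z false + (1 - η) * (1 - muOf N z false)) /
                ((1 - η) * muOf N z false + η * (1 - muOf N z false)) *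
              (((1 - η) * muOf N z false * gammaSR N x fstar z + η * (1 - muOf N z false)) /
                (η * muOf N z false * gammaSR N x fstar z + (1 - η) * (1 - muOf N z false))))
            (1 / ((η * muOf N z false + (1 - η) * (1 - muOf N z false)) /
                ((1 - η) * muOf N z false + η * (1 - muOf N z false)) *
              (((1 - η) * muOf N z false * gammaSR N x fstar z + η * (1 - muOf N z false)) /
                (η * muOf N z false * gammaSR N x fstar z + (1 - η) * (1 - muOf N z false)))))
          ≤ gammaSR N x fstar zh ∧
        gammaSR N x fstar zh ≤
          (1 + ε) * min
            ((η * muOf N z false + (1 - η) * (1 - muOf N z false)) /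
                ((1 - η) * muOf N z false + η * (1 - muOf N z false)) *
              (((1 - η) * muOf N z false * gammaSR N x fstar z + η * (1 - muOf N z false)) /
                (η * muOf N z false * gammaSR N x fstar z + (1 - η) * (1 - muOf N z false))))
            (1 / ((η * muOf N z false + (1 - η) * (1 - muOf N z false)) /
                ((1 - η) * muOf N z false + η * (1 - muOf N z false)) *
              (((1 - η) * muOf N z false * gammaSR N x fstar z + η * (1 - muOf N z false)) /
                (η * muOf N z false * gammaSR N x fstar z + (1 - η) * (1 - muOf N z false)))))) := by
  
  classical
  obtain ⟨hη0, hη4⟩ := hη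
  obtain ⟨hε0, hε2⟩ := hε
  obtain ⟨hlam0, hlam2⟩ := hlam
  have hNpos : (0:ℝ) < (N:ℝ) := by exact_mod_cast hN
  have hNne : (N:ℝ) ≠ 0 := hNpos.ne'
  have hη4' : η < 2/5 := by norm_num at hη4; linarith
  have hη1 : η ≤ 1 := by linarith
  have hp0 : lam ≤ prJoint N x fstar z false := le_trans hmin (min_le_left _ _)
  have hp1 : lam ≤ prJoint N x fstar z true := le_trans hmin (min_le_right _ _)
  have hμsum : muOf N z false + muOf N z true = 1 := S14.muOf_total hNne z
  have hδ0 : (0:ℝ) < ε/8 := by linarith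
  have hδ1 : ε/8 ≤ 1 := by linarith
  -- the four indicator families
  set cJf : Fin N → Bool → ℝ :=
    fun a b => if (fstar (x a) = true) ∧ b = false then 1 else 0 with hcJf
  set cJt : Fin N → Bool → ℝ :=
    fun a b => if (fstar (x a) = true) ∧ b = true then 1 else 0 with hcJt
  set cTf : Fin N → Bool → ℝ :=
    fun a b => if True ∧ b = false then 1 else 0 with hcTf
  set cTt : Fin N → Bool → ℝ :=
    fun a b => if True ∧ b = true then 1 else 0 with hcTt
  have hc01 : ∀ (c : Fin N → Bool → ℝ) (P : Fin N → Prop) (i : Bool)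
      (inst : DecidablePred P),
      c = (fun a b => if P a ∧ b = i then 1 else 0) →
      ∀ a b, c a b = 0 ∨ c a b = 1 := by
    intro c P i inst hc a b
    rw [hc]
    by_cases h : P a ∧ b = i
    · right; simp [h]
    · left; simp [h]
  -- mean formulas
  have hmJf : S14.mexp z η cJf
      = N * ((1-η) * prJoint N x fstar z false + η * prJoint N x fstar z true) := by
    rw [hcJf]
    exact S14.mexp_cstat z η hNne (fun a => fstar (x a) = true) false
  have hmJt : S14.mexp z η cJt
      = N * ((η) * prJoint N x fstar z false + (1-η) * prJoint N x fstar z true) := by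
    rw [hcJt]
    have h := S14.mexp_cstat z η hNne (fun a => fstar (x a) = true) true
    rw [h]
    show (N:ℝ) * ((1-η) * prJoint N x fstar z true + η * prJoint N x fstar z false) = _
    ring
  have hmTf : S14.mexp z η cTf
      = N * ((1-η) * muOf N z false + η * muOf N z true) := by
    rw [hcTf]
    have h := S14.mexp_cstat z η hNne (fun _ : Fin N => True) false
    simp only [Bool.not_false] at h
    rw [S14.empFreq_trueand z false, S14.empFreq_trueand z true] at h
    exact h
  have hmTt : S14.mexp z η cTt
      = N * ((η) * muOf N z false + (1-η) * muOf N z true) := by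
    rw [hcTt]
    have h := S14.mexp_cstat z η hNne (fun _ : Fin N => True) true
    simp only [Bool.not_true] at h
    rw [S14.empFreq_trueand z true, S14.empFreq_trueand z false] at h
    rw [h]
    ring
  -- Ssum formulas
  have hSJf : ∀ zh, S14.Ssum cJf zh = N * prJoint N x fstar zh false := by
    intro zh; rw [hcJf]
    exact S14.Ssum_cstat hNne (fun a => fstar (x a) = true) false zh
  have hSJt : ∀ zh, S14.Ssum cJt zh = N * prJoint N x fstar zh true := by
    intro zh; rw [hcJt]
    exact S14.Ssum_cstat hNne (fun a => fstar (x a) = true) true zh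
  have hSTf : ∀ zh, S14.Ssum cTf zh = N * muOf N zh false := by
    intro zh; rw [hcTf]
    have h := S14.Ssum_cstat hNne (fun _ : Fin N => True) false zh
    rw [S14.empFreq_trueand zh false] at h
    exact h
  have hSTt : ∀ zh, S14.Ssum cTt zh = N * muOf N zh true := by
    intro zh; rw [hcTt]
    have h := S14.Ssum_cstat hNne (fun _ : Fin N => True) true zh
    rw [S14.empFreq_trueand zh true] at h
    exact h
  -- lower bounds on the means
  have hp0' : 0 < prJoint N x fstar z false := lt_of_lt_of_le hlam0 hp0
  have hp1' : 0 < prJoint N x fstar z true := lt_of_lt_of_le hlam0 hp1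
  have hinJ0 : η * lam ≤ (1-η) * prJoint N x fstar z false + η * prJoint N x fstar z true := by
    nlinarith [mul_le_mul_of_nonneg_left hp0 hη0.le, mul_le_mul_of_nonneg_left hp1 hη0.le,
      mul_nonneg (by linarith : (0:ℝ) ≤ 1 - 2*η) hp0'.le]
  have hinJ1 : η * lam ≤ (η) * prJoint N x fstar z false + (1-η) * prJoint N x fstar z true := by
    nlinarith [mul_le_mul_of_nonneg_left hp0 hη0.le, mul_le_mul_of_nonneg_left hp1 hη0.le,
      mul_nonneg (by linarith : (0:ℝ) ≤ 1 - 2*η) hp1'.le]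
  have hinT0 : η * lam ≤ (1-η) * muOf N z false + η * muOf N z true := by
    nlinarith [mul_le_mul_of_nonneg_left (show lam ≤ 1 by linarith) hη0.le,
      mul_nonneg (by linarith : (0:ℝ) ≤ 1 - 2*η) hμ0.le]
  have hinT1 : η * lam ≤ (η) * muOf N z false + (1-η) * muOf N z true := by
    nlinarith [mul_le_mul_of_nonneg_left (show lam ≤ 1 by linarith) hη0.le,
      mul_nonneg (by linarith : (0:ℝ) ≤ 1 - 2*η) hμ1.le]
  have hmge : ∀ (c : Fin N → Bool → ℝ) (v : ℝ), S14.mexp z η c = N * v → η * lam ≤ v →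
      -(((ε/8))^2 * S14.mexp z η c)/3 ≤ -(ε ^ 2 * η * lam * N) / 192 := by
    intro c v hc hv
    rw [hc]
    have h1 : η * lam * N ≤ N * v := by nlinarith [mul_le_mul_of_nonneg_left hv hNpos.le]
    nlinarith [mul_le_mul_of_nonneg_left h1 (sq_nonneg ε)]
  -- the eight tail bounds
  have hB1 : (∑ zh : Fin N → Bool, if (1+ε/8) * S14.mexp z η cJf ≤ S14.Ssum cJf zh then S14.wgt z η zh else 0)
      ≤ Real.exp (-(ε ^ 2 * η * lam * N) / 192) :=
    le_trans (S14.chernoff_upper z η hη0.le hη1 cJf (hc01 cJf _ _ _ hcJf) hδ0 hδ1)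
      (Real.exp_le_exp.mpr (hmge cJf _ hmJf hinJ0))
  have hB2 : (∑ zh : Fin N → Bool, if S14.Ssum cJf zh ≤ (1-ε/8) * S14.mexp z η cJf then S14.wgt z η zh else 0)
      ≤ Real.exp (-(ε ^ 2 * η * lam * N) / 192) :=
    le_trans (S14.chernoff_lower z η hη0.le hη1 cJf (hc01 cJf _ _ _ hcJf) hδ0 hδ1)
      (Real.exp_le_exp.mpr (hmge cJf _ hmJf hinJ0))
  have hB3 : (∑ zh : Fin N → Bool, if (1+ε/8) * S14.mexp z η cJt ≤ S14.Ssum cJt zh then S14.wgt z η zh else 0)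
      ≤ Real.exp (-(ε ^ 2 * η * lam * N) / 192) :=
    le_trans (S14.chernoff_upper z η hη0.le hη1 cJt (hc01 cJt _ _ _ hcJt) hδ0 hδ1)
      (Real.exp_le_exp.mpr (hmge cJt _ hmJt hinJ1))
  have hB4 : (∑ zh : Fin N → Bool, if S14.Ssum cJt zh ≤ (1-ε/8) * S14.mexp z η cJt then S14.wgt z η zh else 0)
      ≤ Real.exp (-(ε ^ 2 * η * lam * N) / 192) :=
    le_trans (S14.chernoff_lower z η hη0.le hη1 cJt (hc01 cJt _ _ _ hcJt) hδ0 hδ1)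
      (Real.exp_le_exp.mpr (hmge cJt _ hmJt hinJ1))
  have hB5 : (∑ zh : Fin N → Bool, if (1+ε/8) * S14.mexp z η cTf ≤ S14.Ssum cTf zh then S14.wgt z η zh else 0)
      ≤ Real.exp (-(ε ^ 2 * η * lam * N) / 192) :=
    le_trans (S14.chernoff_upper z η hη0.le hη1 cTf (hc01 cTf _ _ _ hcTf) hδ0 hδ1)
      (Real.exp_le_exp.mpr (hmge cTf _ hmTf hinT0))
  have hB6 : (∑ zh : Fin N → Bool, if S14.Ssum cTf zh ≤ (1-ε/8) * S14.mexp z η cTf then S14.wgt z η zh else 0)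
      ≤ Real.exp (-(ε ^ 2 * η * lam * N) / 192) :=
    le_trans (S14.chernoff_lower z η hη0.le hη1 cTf (hc01 cTf _ _ _ hcTf) hδ0 hδ1)
      (Real.exp_le_exp.mpr (hmge cTf _ hmTf hinT0))
  have hB7 : (∑ zh : Fin N → Bool, if (1+ε/8) * S14.mexp z η cTt ≤ S14.Ssum cTt zh then S14.wgt z η zh else 0)
      ≤ Real.exp (-(ε ^ 2 * η * lam * N) / 192) :=
    le_trans (S14.chernoff_upper z η hη0.le hη1 cTt (hc01 cTt _ _ _ hcTt) hδ0 hδ1)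
      (Real.exp_le_exp.mpr (hmge cTt _ hmTt hinT1))
  have hB8 : (∑ zh : Fin N → Bool, if S14.Ssum cTt zh ≤ (1-ε/8) * S14.mexp z η cTt then S14.wgt z η zh else 0)
      ≤ Real.exp (-(ε ^ 2 * η * lam * N) / 192) :=
    le_trans (S14.chernoff_lower z η hη0.le hη1 cTt (hc01 cTt _ _ _ hcTt) hδ0 hδ1)
      (Real.exp_le_exp.mpr (hmge cTt _ hmTt hinT1))
  rw [S14.noiseProb_eq]
  refine le_trans ?_ (S14.union8 z η hη0.le hη1
    (fun zh => (1+ε/8) * S14.mexp z η cJf ≤ S14.Ssum cJf zh)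
    (fun zh => S14.Ssum cJf zh ≤ (1-ε/8) * S14.mexp z η cJf)
    (fun zh => (1+ε/8) * S14.mexp z η cJt ≤ S14.Ssum cJt zh)
    (fun zh => S14.Ssum cJt zh ≤ (1-ε/8) * S14.mexp z η cJt)
    (fun zh => (1+ε/8) * S14.mexp z η cTf ≤ S14.Ssum cTf zh)
    (fun zh => S14.Ssum cTf zh ≤ (1-ε/8) * S14.mexp z η cTf)
    (fun zh => (1+ε/8) * S14.mexp z η cTt ≤ S14.Ssum cTt zh)
    (fun zh => S14.Ssum cTt zh ≤ (1-ε/8) * S14.mexp z η cTt)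
    _ ?_)
  · linarith [hB1, hB2, hB3, hB4, hB5, hB6, hB7, hB8]
  · intro zh h1 h2 h3 h4 h5 h6 h7 h8
    rw [not_le] at h1 h2 h3 h4 h5 h6 h7 h8
    rw [hSJf zh, hmJf] at h1 h2
    rw [hSJt zh, hmJt] at h3 h4
    rw [hSTf zh, hmTf] at h5 h6
    rw [hSTt zh, hmTt] at h7 h8
    have hb2 := S14.scale_le hNpos h1.le
    have hb1 := S14.scale_ge hNpos h2.le
    have hb4 := S14.scale_le hNpos h3.le
    have hb3 := S14.scale_ge hNpos h4.le
    have hb6 := S14.scale_le hNpos h5.le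
    have hb5 := S14.scale_ge hNpos h6.le
    have hb8 := S14.scale_le hNpos h7.le
    have hb7 := S14.scale_ge hNpos h8.le
    simp only [gammaSR, rate]
    exact S14.det (muOf N z false) (muOf N z true)
      (prJoint N x fstar z false) (prJoint N x fstar z true)
      (muOf N zh false) (muOf N zh true)
      (prJoint N x fstar zh false) (prJoint N x fstar zh true)
      η lam ε (gammaSR N x fstar z)
      hμsum hμ0 hμ1 hη0 hη4 hlam0 hε0 hε2 hp0 hp1 hord rfl
      hb1 hb2 hb3 hb4 hb5 hb6 hb7 hb8
end
end

section
/- Fix a realization of the noisy attributes and let f : X → {0,1} be a classifier. Let η'_0, η'_1 ∈ (0, 1/2) be estimated noise parameters, ζ := max{|η_0 − η'_0|, |η_1 − η'_1|}, and let τ ∈ [0,1], δ ≥ 0. Define n_0 := (1−η_1)·Pr[f=1,Ẑ=0] − η_1·Pr[f=1,Ẑ=1], n_1 := (1−η_0)·Pr[f=1,Ẑ=1] − η_0·Pr[f=1,Ẑ=0], d_0 := (1−η_1)·μ̂_0 − η_1·μ̂_1, d_1 := (1−η_0)·μ̂_1 − η_0·μ̂_0, P := Pr[f=1] := #{a : f(x_a)=1}/N,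 and let Γ'_0(f), Γ'_1(f) be defined as Γ_0(f), Γ_1(f) with η'_1, η'_0 in place of η_1, η_0 respectively. Assume n_0, n_1, d_0, d_1, Γ_0(f), Γ_1(f), Γ'_0(f), Γ'_1(f) are all positive; assume the perturbation bounds |Γ'_0(f) − Γ_0(f)| ≤ ζP/d_0, |Γ'_1(f) − Γ_1(f)| ≤ ζP/d_1, |1/Γ'_0(f) − 1/Γ_0(f)| ≤ ζ/n_0, |1/Γ'_1(f) − 1/Γ_1(f)| ≤ ζ/n_1 hold, with Γ'_1(f) − ζP/d_1 ≥ 0, 1/Γ'_0(f) − ζ/n_0 ≥ 0, Γ'_0(f) − ζP/d_0 ≥ 0, and 1/Γ'_1(f) − ζ/n_1 ≥ 0; and assume min{Γ'_0(f)/Γ'_1(f), Γ'_1(f)/Γ'_0(f)} ≥ τ − δ. Then, with α_1 := P/(Γ'_0(f)·d_1) + Γ'_1(f)/n_0 and α_0 := P/(Γ'_1(f)·d_0) + Γ'_0(f)/n_1, it holds that γ^Δ(f,Ŝ) = min{Γ_0(f)/Γ_1(f), Γ_1(f)/Γ_0(f)} ≥ τ − δ − ζ·max{α_0, α_1}. 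-/
open scoped Classical

noncomputable section

lemma key_pert (G0 G1 G0' G1' n0 n1 d0 d1 P ζ t : ℝ)
    (hζ : 0 ≤ ζ) (hP : 0 ≤ P)
    (hG0 : 0 < G0) (hG1 : 0 < G1) (hG0' : 0 < G0') (hG1' : 0 < G1')
    (hn0 : 0 < n0) (hn1 : 0 < n1) (hd0 : 0 < d0) (hd1 : 0 < d1)
    (h1 : |G0' - G0| ≤ ζ * P / d0) (h2 : |G1' - G1| ≤ ζ * P / d1)
    (h3 : |1/G0' - 1/G0| ≤ ζ / n0) (h4 : |1/G1' - 1/G1| ≤ ζ / n1)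
    (hs1 : 0 ≤ G1' - ζ * P / d1) (hs2 : 0 ≤ 1/G0' - ζ / n0)
    (hs3 : 0 ≤ G0' - ζ * P / d0) (hs4 : 0 ≤ 1/G1' - ζ / n1)
    (hcon : t ≤ min (G0'/G1') (G1'/G0')) :
    t - ζ * max (P/(G1'*d0) + G0'/n1) (P/(G0'*d1) + G1'/n0)
      ≤ min (G0/G1) (G1/G0) := by
  have hG1n : G1' ≠ 0 := ne_of_gt hG1'
  have hG0n : G0' ≠ 0 := ne_of_gt hG0'
  have hd0n : d0 ≠ 0 := ne_of_gt hd0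
  have hd1n : d1 ≠ 0 := ne_of_gt hd1
  have hn0n : n0 ≠ 0 := ne_of_gt hn0
  have hn1n : n1 ≠ 0 := ne_of_gt hn1
  -- bound 1: G0/G1
  have hA : G0' - ζ * P / d0 ≤ G0 := by linarith [(abs_le.1 h1).2]
  have hB : 1/G1' - ζ / n1 ≤ 1/G1 := by linarith [(abs_le.1 h4).2]
  have prod1 : (G0' - ζ * P / d0) * (1/G1' - ζ / n1) ≤ G0 * (1/G1) :=
    mul_le_mul hA hB hs4 hG0.le
  have hab1 : 0 ≤ (ζ * P / d0) * (ζ / n1) :=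
    mul_nonneg (div_nonneg (mul_nonneg hζ hP) hd0.le) (div_nonneg hζ hn1.le)
  have e1 : (G0' - ζ * P / d0) * (1/G1' - ζ / n1)
      = G0'/G1' - ζ * (P/(G1'*d0) + G0'/n1) + (ζ * P / d0) * (ζ / n1) := by
    field_simp
    ring
  have bound1 : G0'/G1' - ζ * (P/(G1'*d0) + G0'/n1) ≤ G0/G1 := by
    have hmul : G0 * (1/G1) = G0/G1 := by ring
    linarith [prod1, hab1, e1, hmul]
  -- bound 2: G1/G0
  have hA' : G1' - ζ * P / d1 ≤ G1 := by linarith [(abs_le.1 h2).2]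
  have hB' : 1/G0' - ζ / n0 ≤ 1/G0 := by linarith [(abs_le.1 h3).2]
  have prod2 : (G1' - ζ * P / d1) * (1/G0' - ζ / n0) ≤ G1 * (1/G0) :=
    mul_le_mul hA' hB' hs2 hG1.le
  have hab2 : 0 ≤ (ζ * P / d1) * (ζ / n0) :=
    mul_nonneg (div_nonneg (mul_nonneg hζ hP) hd1.le) (div_nonneg hζ hn0.le)
  have e2 : (G1' - ζ * P / d1) * (1/G0' - ζ / n0)
      = G1'/G0' - ζ * (P/(G0'*d1) + G1'/n0) + (ζ * P / d1) * (ζ / n0) := by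
    field_simp
    ring
  have bound2 : G1'/G0' - ζ * (P/(G0'*d1) + G1'/n0) ≤ G1/G0 := by
    have hmul : G1 * (1/G0) = G1/G0 := by ring
    linarith [prod2, hab2, e2, hmul]
  have hmax : ζ * (P/(G1'*d0) + G0'/n1)
      ≤ ζ * max (P/(G1'*d0) + G0'/n1) (P/(G0'*d1) + G1'/n0) :=
    mul_le_mul_of_nonneg_left (le_max_left _ _) hζ
  have hmax' : ζ * (P/(G0'*d1) + G1'/n0)
      ≤ ζ * max (P/(G1'*d0) + G0'/n1) (P/(G0'*d1) + G1'/n0) :=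
    mul_le_mul_of_nonneg_left (le_max_right _ _) hζ
  have := min_le_left (G0'/G1') (G1'/G0')
  have := min_le_right (G0'/G1') (G1'/G0')
  refine le_min ?_ ?_
  · linarith [bound1]
  · linarith [bound2]

/-- Effect of estimation error in the noise parameters: given the stated
perturbation bounds between the true denoised rates `Γ_i(f)` and the estimated ones
`Γ'_i(f)` (built from `η'_0, η'_1`), the denoised fairness constraint for the estimated
parameters implies `γ^Δ(f,Ŝ) ≥ τ − δ − ζ·max{α_0, α_1}`. -/
theorem stmt_17 {X : Type} (N : ℕ) (hN : 1 ≤ N)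
    (x : Fin N → X) (z : Fin N → Bool) (y : Fin N → Bool) (zh : Fin N → Bool)
    (f : X → Bool)
    (η0 η1 η0' η1' : ℝ)
    (hη0 : 0 < η0 ∧ η0 < 1/2) (hη1 : 0 < η1 ∧ η1 < 1/2)
    (hη0' : 0 < η0' ∧ η0' < 1/2) (hη1' : 0 < η1' ∧ η1' < 1/2)
    (τ δ : ℝ) (hτ : 0 ≤ τ ∧ τ ≤ 1) (hδ : 0 ≤ δ)
    -- positivity of numerators, denominators and (estimated) denoised rates
    (hn0 : 0 < (1 - η1) * prJoint N x f zh false - η1 * prJoint N x f zh true)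
    (hn1 : 0 < (1 - η0) * prJoint N x f zh true - η0 * prJoint N x f zh false)
    (hd0 : 0 < (1 - η1) * muOf N zh false - η1 * muOf N zh true)
    (hd1 : 0 < (1 - η0) * muOf N zh true - η0 * muOf N zh false)
    (hG0 : 0 < Gamma0 N x η0 η1 f zh) (hG1 : 0 < Gamma1 N x η0 η1 f zh)
    (hG0' : 0 < Gamma0 N x η0' η1' f zh) (hG1' : 0 < Gamma1 N x η0' η1' f zh)
    -- perturbation bounds, with ζ = max{|η0 − η'0|, |η1 − η'1|} and P = Pr[f = 1]
    (hpert0 : |Gamma0 N x η0' η1' f zh - Gamma0 N x η0 η1 f zh| ≤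
      max |η0 - η0'| |η1 - η1'| * empFreq N (fun a => f (x a) = true) /
        ((1 - η1) * muOf N zh false - η1 * muOf N zh true))
    (hpert1 : |Gamma1 N x η0' η1' f zh - Gamma1 N x η0 η1 f zh| ≤
      max |η0 - η0'| |η1 - η1'| * empFreq N (fun a => f (x a) = true) /
        ((1 - η0) * muOf N zh true - η0 * muOf N zh false))
    (hpertInv0 : |1 / Gamma0 N x η0' η1' f zh - 1 / Gamma0 N x η0 η1 f zh| ≤
      max |η0 - η0'| |η1 - η1'| /
        ((1 - η1) * prJoint N x f zh false - η1 * prJoint N x f zh true))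
    (hpertInv1 : |1 / Gamma1 N x η0' η1' f zh - 1 / Gamma1 N x η0 η1 f zh| ≤
      max |η0 - η0'| |η1 - η1'| /
        ((1 - η0) * prJoint N x f zh true - η0 * prJoint N x f zh false))
    -- nonnegativity side conditions
    (hside1 : 0 ≤ Gamma1 N x η0' η1' f zh -
      max |η0 - η0'| |η1 - η1'| * empFreq N (fun a => f (x a) = true) /
        ((1 - η0) * muOf N zh true - η0 * muOf N zh false))
    (hside2 : 0 ≤ 1 / Gamma0 N x η0' η1' f zh -
      max |η0 - η0'| |η1 - η1'| /
        ((1 - η1) * prJoint N x f zh false - η1 * prJoint N x f zh true))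
    (hside3 : 0 ≤ Gamma0 N x η0' η1' f zh -
      max |η0 - η0'| |η1 - η1'| * empFreq N (fun a => f (x a) = true) /
        ((1 - η1) * muOf N zh false - η1 * muOf N zh true))
    (hside4 : 0 ≤ 1 / Gamma1 N x η0' η1' f zh -
      max |η0 - η0'| |η1 - η1'| /
        ((1 - η0) * prJoint N x f zh true - η0 * prJoint N x f zh false))
    -- the denoised constraint holds for the estimated parameters
    (hcon : τ - δ ≤ gammaDelta N x η0' η1' f zh) :
    τ - δ - max |η0 - η0'| |η1 - η1'| *
        max
          (empFreq N (fun a => f (x a) = true) /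
              (Gamma1 N x η0' η1' f zh *
                ((1 - η1) * muOf N zh false - η1 * muOf N zh true)) +
            Gamma0 N x η0' η1' f zh /
              ((1 - η0) * prJoint N x f zh true - η0 * prJoint N x f zh false))
          (empFreq N (fun a => f (x a) = true) /
              (Gamma0 N x η0' η1' f zh *
                ((1 - η0) * muOf N zh true - η0 * muOf N zh false)) +
            Gamma1 N x η0' η1' f zh /
              ((1 - η1) * prJoint N x f zh false - η1 * prJoint N x f zh true)) ≤
      gammaDelta N x η0 η1 f zh := by
  have hζ : 0 ≤ max |η0 - η0'| |η1 - η1'| := le_trans (abs_nonneg _) (le_max_left _ _)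
  have hP : 0 ≤ empFreq N (fun a => f (x a) = true) := by
    unfold empFreq; positivity
  unfold gammaDelta at hcon ⊢
  exact key_pert _ _ _ _ _ _ _ _ _ _ _ hζ hP hG0 hG1 hG0' hG1' hn0 hn1 hd0 hd1
    hpert0 hpert1 hpertInv0 hpertInv1 hside1 hside2 hside3 hside4 hcon
end
end
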